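/- arXiv:2107.10553 — 4 statements merged into one kernel-verified Lean document; each statement's English description precedes it below -/
import Mathlib

section
/- Let Φ be a Young function (convex, increasing, Φ(0)=0, lim_{t→∞}Φ(t)=∞). Then Φ satisfies the ∇₂-condition (there exists k > 1 with Φ(t) ≤ Φ(kt)/(2k) for all t > 0) if and only if there exists p ∈ (1,∞) such that t ↦ Φ(t)/t^p is almost increasing on (0,∞), i.e., there is C > 0 with Φ(t)/t^p ≤ C Φ(s)/s^p whenever 0 < t < s. -/
open MeasureTheory ENNReal NNReal Metric Set Filter Topology

noncomputable def geninv (Φ : ℝ≥0∞ → ℝ≥0∞) (u : ℝ≥0∞) : ℝ≥0∞ :=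
  sInf {t : ℝ≥0∞ | u < Φ t}

/-- Generalized Young function (class Φ_Y of the paper): increasing, vanishing at 0,
infinite at ∞, convex, left continuous, nondegenerate. -/
def IsYoung (Φ : ℝ≥0∞ → ℝ≥0∞) : Prop :=
  Monotone Φ ∧ Φ 0 = 0 ∧ Φ ⊤ = ⊤ ∧
    (∀ x y a b : ℝ≥0∞, a + b = 1 → Φ (a * x + b * y) ≤ a * Φ x + b * Φ y) ∧
    (∀ t : ℝ≥0∞, 0 < t → ContinuousWithinAt Φ (Set.Iio t) t) ∧
    (∃ t : ℝ≥0∞, 0 < t ∧ Φ t < ⊤) ∧ (∃ t : ℝ≥0∞, t ≠ ⊤ ∧ 0 < Φ t)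

/-- The ∇₂-condition. -/
def Nabla2 (Φ : ℝ≥0∞ → ℝ≥0∞) : Prop :=
  ∃ k : ℝ≥0, 1 < k ∧ ∀ t : ℝ≥0∞, 0 < t → Φ t ≤ Φ ((k : ℝ≥0∞) * t) / (2 * (k : ℝ≥0∞))

/-! If `2k Φ(t) ≤ Φ(kt)`, iterating gives `(2k)ⁿ Φ(t) ≤ Φ(kⁿ t)`; with `p = log_k (2k)`, so that
`k^p = 2k`, bracketing `s / t` between consecutive powers of `k` yields
`Φ(t)/t^p ≤ 2k Φ(s)/s^p`. Conversely, almost monotonicity applied to `t < kt` gives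
`k^p Φ(t) ≤ C Φ(kt)`, which is the ∇₂-inequality as soon as `k^(p-1) ≥ 2C`. -/

section AlmostIncreasing

variable {Φ : ℝ≥0∞ → ℝ≥0∞}

lemma nabla2_iff_mul_le :
    Nabla2 Φ ↔ ∃ k : ℝ≥0, 1 < k ∧ ∀ t, 0 < t → 2 * (k : ℝ≥0∞) * Φ t ≤ Φ (k * t) := by
  refine exists_congr fun k => and_congr_right fun hk => forall₂_congr fun t _ => ?_
  have hk0 : (k : ℝ≥0∞) ≠ 0 := by exact_mod_cast (zero_lt_one.trans hk).ne'
  rw [ENNReal.le_div_iff_mul_le (.inl (mul_ne_zero two_ne_zero hk0))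
    (.inl (mul_ne_top ofNat_ne_top coe_ne_top)), mul_comm]

lemma pow_mul_le_of_mul_le {a k : ℝ≥0∞} (hk : k ≠ 0) (h : ∀ t, 0 < t → a * Φ t ≤ Φ (k * t))
    (n : ℕ) {t : ℝ≥0∞} (ht : 0 < t) : a ^ n * Φ t ≤ Φ (k ^ n * t) := by
  induction n with
  | zero => simp
  | succ n ih =>
    calc a ^ (n + 1) * Φ t = a * (a ^ n * Φ t) := by ring
      _ ≤ a * Φ (k ^ n * t) := by gcongr
      _ ≤ Φ (k * (k ^ n * t)) := h _ (ENNReal.mul_pos (pow_ne_zero n hk) ht.ne')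
      _ = Φ (k ^ (n + 1) * t) := by rw [← mul_assoc, pow_succ']

lemma exists_pow_mul_le_lt_pow_succ_mul {k : ℝ≥0} (hk : 1 < k) {t s : ℝ≥0∞} (ht : 0 < t)
    (hts : t < s) (hs : s < ⊤) :
    ∃ n : ℕ, (k : ℝ≥0∞) ^ n * t ≤ s ∧ s < (k : ℝ≥0∞) ^ (n + 1) * t := by
  lift s to ℝ≥0 using hs.ne
  lift t to ℝ≥0 using (hts.trans_le le_top).ne
  have ht0 : 0 < t := by exact_mod_cast ht
  obtain ⟨n, hn, hn'⟩ :=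
    exists_nat_pow_near ((one_le_div₀ ht0).mpr (by exact_mod_cast hts.le)) hk
  exact ⟨n, by exact_mod_cast (le_div_iff₀ ht0).mp hn, by exact_mod_cast (div_lt_iff₀ ht0).mp hn'⟩

lemma div_rpow_le_of_rpow_mul_le (hΦ : Monotone Φ) {k : ℝ≥0} (hk : 1 < k) {p : ℝ} (hp : 0 ≤ p)
    (h : ∀ t, 0 < t → (k : ℝ≥0∞) ^ p * Φ t ≤ Φ (k * t)) {t s : ℝ≥0∞} (ht : 0 < t) (hts : t < s)
    (hs : s < ⊤) : Φ t / t ^ p ≤ (k : ℝ≥0∞) ^ p * (Φ s / s ^ p) := by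
  set a := (k : ℝ≥0∞) ^ p
  have hk0 : (k : ℝ≥0∞) ≠ 0 := by exact_mod_cast (zero_lt_one.trans hk).ne'
  have ha0 : a ≠ 0 := (ENNReal.rpow_pos (pos_iff_ne_zero.mpr hk0) coe_ne_top).ne'
  have haT : a ≠ ⊤ := rpow_ne_top_of_nonneg hp coe_ne_top
  obtain ⟨n, hn, hn'⟩ := exists_pow_mul_le_lt_pow_succ_mul hk ht hts hs
  have hΦs : a ^ n * Φ t ≤ Φ s := (pow_mul_le_of_mul_le hk0 h n ht).trans (hΦ hn)
  have hsp : s ^ p ≤ a ^ (n + 1) * t ^ p := by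
    calc s ^ p ≤ ((k : ℝ≥0∞) ^ (n + 1) * t) ^ p := ENNReal.rpow_le_rpow hn'.le hp
      _ = a ^ (n + 1) * t ^ p := by
        rw [mul_rpow_of_nonneg _ _ hp, ← ENNReal.rpow_natCast_mul, mul_comm _ p,
          ENNReal.rpow_mul_natCast]
  calc Φ t / t ^ p = a ^ (n + 1) * Φ t / (a ^ (n + 1) * t ^ p) :=
        (ENNReal.mul_div_mul_left _ _ (pow_ne_zero _ ha0) (pow_ne_top haT)).symm
    _ ≤ a ^ (n + 1) * Φ t / s ^ p := by gcongr
    _ = a * (a ^ n * Φ t / s ^ p) := by rw [pow_succ', mul_assoc, mul_div_assoc]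
    _ ≤ a * (Φ s / s ^ p) := by gcongr

lemma rpow_mul_le_of_div_rpow_le {p : ℝ} {C : ℝ≥0∞}
    (h : ∀ t s, 0 < t → t < s → s < ⊤ → Φ t / t ^ p ≤ C * (Φ s / s ^ p)) {k : ℝ≥0} (hk : 1 < k)
    {t : ℝ≥0∞} (ht : 0 < t) (htT : t < ⊤) : (k : ℝ≥0∞) ^ p * Φ t ≤ C * Φ (k * t) := by
  have hk0 : (k : ℝ≥0∞) ≠ 0 := by exact_mod_cast (zero_lt_one.trans hk).ne'
  have hkt0 : (k : ℝ≥0∞) * t ≠ 0 := mul_ne_zero hk0 ht.ne'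
  have hktT : (k : ℝ≥0∞) * t ≠ ⊤ := mul_ne_top coe_ne_top htT.ne
  have hkt : t < k * t := by
    simpa using ENNReal.mul_lt_mul_left ht.ne' htT.ne (by exact_mod_cast hk : (1 : ℝ≥0∞) < k)
  calc (k : ℝ≥0∞) ^ p * Φ t = (k * t) ^ p * (Φ t / t ^ p) := by
        rw [mul_rpow_of_ne_zero hk0 ht.ne', mul_assoc, ENNReal.mul_div_cancel
          (ENNReal.rpow_pos ht htT.ne).ne' (rpow_ne_top_of_ne_zero ht.ne' htT.ne)]
    _ ≤ (k * t) ^ p * (C * (Φ (k * t) / (k * t) ^ p)) := by gcongr; exact h t _ ht hkt hktT.lt_top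
    _ = C * Φ (k * t) := by
        rw [mul_left_comm, ENNReal.mul_div_cancel (ENNReal.rpow_pos (pos_iff_ne_zero.mpr hkt0)
          hktT).ne' (rpow_ne_top_of_ne_zero hkt0 hktT)]

lemma exists_two_mul_mul_le_rpow (c : ℝ≥0) {p : ℝ} (hp : 1 < p) :
    ∃ k : ℝ≥0, 1 < k ∧ 2 * k * c ≤ k ^ p := by
  obtain ⟨k, hk, hk1⟩ := ((NNReal.tendsto_rpow_atTop (sub_pos.mpr hp)).eventually_ge_atTop (2 * c)
    |>.and (eventually_gt_atTop 1)).exists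
  refine ⟨k, hk1, ?_⟩
  have hk0 : k ≠ 0 := (zero_lt_one.trans hk1).ne'
  calc 2 * k * c = k * (2 * c) := by ring
    _ ≤ k * k ^ (p - 1) := by gcongr
    _ = k ^ p := by rw [NNReal.rpow_sub_one hk0, mul_div_cancel₀ _ hk0]

end AlmostIncreasing

lemma one_lt_logb_two_mul {k : ℝ} (hk : 1 < k) : 1 < Real.logb k (2 * k) := by
  rw [Real.logb_mul two_ne_zero (by positivity), Real.logb_self_eq_one hk]
  linarith [Real.logb_pos hk one_lt_two]

lemma coe_rpow_logb_two_mul {k : ℝ≥0} (hk : 1 < k) :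
    (k : ℝ≥0∞) ^ Real.logb k (2 * k) = 2 * k := by
  have hkR : (1 : ℝ) < k := hk
  have hkp : k ^ Real.logb k (2 * k) = 2 * k :=
    NNReal.eq (by push_cast; exact Real.rpow_logb (by positivity) hkR.ne' (by positivity))
  rw [← coe_rpow_of_ne_zero (zero_lt_one.trans hk).ne']
  exact_mod_cast hkp

/-- `Φ ∈ ∇₂` iff `Φ(t)/t^p` is almost increasing for some `p > 1`. -/
theorem stmt2 (Φ : ℝ≥0∞ → ℝ≥0∞) (hΦ : IsYoung Φ) :
    Nabla2 Φ ↔ ∃ p : ℝ, 1 < p ∧ ∃ C : ℝ≥0∞, 0 < C ∧ C ≠ ⊤ ∧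
      ∀ t s : ℝ≥0∞, 0 < t → t < s → s < ⊤ → Φ t / t ^ p ≤ C * (Φ s / s ^ p) := by
  obtain ⟨hmono, -, hΦtop, -⟩ := hΦ
  rw [nabla2_iff_mul_le]
  constructor
  · rintro ⟨k, hk, h⟩
    have hp := one_lt_logb_two_mul (show (1 : ℝ) < k from hk)
    refine ⟨_, hp, 2 * k, by positivity, mul_ne_top ofNat_ne_top coe_ne_top,
      fun t s ht hts hs => ?_⟩
    rw [← coe_rpow_logb_two_mul hk] at h ⊢
    exact div_rpow_le_of_rpow_mul_le hmono hk (zero_le_one.trans hp.le) h ht hts hs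
  · rintro ⟨p, hp, C, hC0, hCT, h⟩
    obtain ⟨k, hk, hkC⟩ := exists_two_mul_mul_le_rpow C.toNNReal hp
    have hk0 : k ≠ 0 := (zero_lt_one.trans hk).ne'
    refine ⟨k, hk, fun t ht => ?_⟩
    obtain rfl | htT := eq_or_lt_of_le (le_top : t ≤ ⊤)
    · rw [mul_top (coe_ne_zero.mpr hk0), hΦtop]
      exact le_top
    rw [← ENNReal.mul_le_mul_iff_right hC0.ne' hCT]
    calc C * (2 * k * Φ t) = 2 * k * C * Φ t := by ring
      _ ≤ (k : ℝ≥0∞) ^ p * Φ t := by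
        gcongr
        rw [← coe_toNNReal hCT, ← coe_rpow_of_ne_zero hk0]
        exact_mod_cast hkC
      _ ≤ C * Φ (k * t) := rpow_mul_le_of_div_rpow_le h hk ht htT
end

section
/- Let Φ be a Young function with b(Φ) < ∞ and Φ(b(Φ)) < ∞, and let 0 < δ < 1. Then there exists a Young function Ψ with b(Ψ) = b(Φ) and Ψ(b(Ψ)) = ∞ such that Ψ(δt) ≤ Φ(t) ≤ Ψ(t) for all t ∈ [0,∞). -/
/-!
With `b = b(Φ)` and `ε = b - δ b`, add to `Φ` the barrier `g = sup_n (n+1)² (t - (b - ε/(n+1)))`.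
As a supremum of increasing affine ramps `g` is convex and left continuous; it vanishes on
`[0, δ b]`, is finite on `[0, b)` (for `t < b` only finitely many ramps are nonzero at `t`),
and `g b = sup_n (n+1) ε = ∞`. So `Ψ = Φ + g` is a Young function that is infinite exactly on
`[b, ∞]`, `Φ ≤ Ψ`, and `Ψ (δ t) = Φ (δ t) ≤ Φ t` for `t ≤ b`, while `Φ t = ∞` for `t > b`.
-/

open MeasureTheory ENNReal NNReal Metric Set Filter Topology

section Ramp

variable {ι : Type*}

noncomputable def supRamp (K c : ι → ℝ≥0∞) (t : ℝ≥0∞) : ℝ≥0∞ := ⨆ i, K i * (t - c i)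

variable (K c : ι → ℝ≥0∞)

lemma convex_comb_tsub_le (x y a b c : ℝ≥0∞) (hab : a + b = 1) :
    (a * x + b * y) - c ≤ a * (x - c) + b * (y - c) := by
  rw [tsub_le_iff_right]
  calc a * x + b * y ≤ a * (x - c + c) + b * (y - c + c) := by gcongr <;> exact le_tsub_add
    _ = a * (x - c) + b * (y - c) + (a + b) * c := by ring
    _ = a * (x - c) + b * (y - c) + c := by rw [hab, one_mul]

lemma supRamp_mono : Monotone (supRamp K c) := fun _ _ hst =>
  iSup_mono fun _ => by gcongr

lemma supRamp_convex (x y a b : ℝ≥0∞) (hab : a + b = 1) :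
    supRamp K c (a * x + b * y) ≤ a * supRamp K c x + b * supRamp K c y :=
  iSup_le fun i => calc
    K i * ((a * x + b * y) - c i) ≤ K i * (a * (x - c i) + b * (y - c i)) := by
        gcongr; exact convex_comb_tsub_le x y a b (c i) hab
    _ = a * (K i * (x - c i)) + b * (K i * (y - c i)) := by ring
    _ ≤ a * supRamp K c x + b * supRamp K c y := by
        gcongr <;> exact le_iSup (fun i => K i * (_ - c i)) i

lemma supRamp_continuousWithinAt_Iio (t : ℝ≥0∞) :
    ContinuousWithinAt (supRamp K c) (Iio t) t := by
  have h := (supRamp_mono K c).tendsto_nhdsLT t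
  suffices sSup (supRamp K c '' Iio t) = supRamp K c t by rwa [this] at h
  calc sSup (supRamp K c '' Iio t) = ⨆ i, ⨆ s : Iio t, K i * ((s : ℝ≥0∞) - c i) := by
        rw [sSup_image, iSup_subtype']
        exact iSup_comm
    _ = supRamp K c t := by
        refine iSup_congr fun i => ?_
        rw [← ENNReal.mul_iSup, ← ENNReal.iSup_sub, ← sSup_eq_iSup', isLUB_Iio.sSup_eq]

lemma supRamp_eq_zero {t : ℝ≥0∞} (ht : ∀ i, t ≤ c i) : supRamp K c t = 0 := by
  simp [supRamp, tsub_eq_zero_of_le (ht _)]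

end Ramp

section Barrier

noncomputable def barrier (b ε : ℝ≥0∞) : ℝ≥0∞ → ℝ≥0∞ :=
  supRamp (fun n : ℕ => ((n : ℝ≥0∞) + 1) ^ 2) (fun n => b - ε / (n + 1))

variable {b ε : ℝ≥0∞}

lemma barrier_eq_zero {t : ℝ≥0∞} (ht : t ≤ b - ε) : barrier b ε t = 0 :=
  supRamp_eq_zero _ _ fun _ => ht.trans <| tsub_le_tsub_left
    ((ENNReal.div_le_div_left le_add_self ε).trans_eq (div_one ε)) b

lemma barrier_lt_top (hε : ε ≠ ⊤) {t : ℝ≥0∞} (ht : t < b) : barrier b ε t < ⊤ := by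
  have hbt : b - t ≠ 0 := (tsub_pos_of_lt ht).ne'
  obtain ⟨N, hN⟩ := ENNReal.exists_nat_gt (ENNReal.div_lt_top hε hbt).ne
  have hvanish : ∀ n : ℕ, N ≤ n → t ≤ b - ε / (n + 1) := fun n hn => by
    refine ENNReal.le_sub_of_add_le_right (ENNReal.div_ne_top hε (by simp))
      (add_le_of_le_tsub_left_of_le ht.le ?_)
    refine ENNReal.div_le_of_le_mul' ((ENNReal.div_lt_iff (.inl hbt) (.inr hε)).1 ?_).le
    exact hN.trans_le (by exact_mod_cast hn.trans (Nat.le_succ n))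
  calc barrier b ε t ≤ ((N : ℝ≥0∞) + 1) ^ 2 * t := iSup_le fun n => by
        show ((n : ℝ≥0∞) + 1) ^ 2 * (t - (b - ε / (n + 1))) ≤ _
        rcases le_or_gt N n with hn | hn
        · simp [tsub_eq_zero_of_le (hvanish n hn)]
        · gcongr
          exact tsub_le_self
    _ < ⊤ := ENNReal.mul_lt_top (by simp) (ht.trans_le le_top)

lemma barrier_self (hb : b ≠ ⊤) (hε : ε ≠ 0) (hεb : ε ≤ b) : barrier b ε b = ⊤ := by
  have hterm : ∀ n : ℕ, ((n : ℝ≥0∞) + 1) ^ 2 * (b - (b - ε / (n + 1))) = (n + 1) * ε := by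
    intro n
    have hn0 : (n : ℝ≥0∞) + 1 ≠ 0 := by simp
    have hn : (n : ℝ≥0∞) + 1 ≠ ⊤ := by simp
    have hεn : ε / (n + 1) ≤ b :=
      ENNReal.div_le_of_le_mul (hεb.trans (le_mul_of_one_le_right' le_add_self))
    rw [ENNReal.sub_sub_cancel hb hεn, sq, mul_assoc, ENNReal.mul_div_cancel hn0 hn]
  refine eq_top_iff.2 ?_
  calc ⊤ = (⨆ n : ℕ, (n : ℝ≥0∞)) * ε := by rw [ENNReal.iSup_natCast, ENNReal.top_mul hε]
    _ = ⨆ n : ℕ, (n : ℝ≥0∞) * ε := ENNReal.iSup_mul _ _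
    _ ≤ barrier b ε b := iSup_mono fun n => by
        rw [hterm]; gcongr; exact le_self_add

end Barrier

section Young

variable {Φ : ℝ≥0∞ → ℝ≥0∞}

lemma lt_top_of_lt_sInf_eq_top {t : ℝ≥0∞} (ht : t < sInf {s | Φ s = ⊤}) : Φ t < ⊤ :=
  lt_top_iff_ne_top.2 fun h => (sInf_le (show t ∈ {s | Φ s = ⊤} from h)).not_gt ht

lemma Monotone.eq_top_of_sInf_eq_top_lt (hΦ : Monotone Φ) {t : ℝ≥0∞}
    (ht : sInf {s | Φ s = ⊤} < t) : Φ t = ⊤ := by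
  obtain ⟨s, hs, hst⟩ := sInf_lt_iff.1 ht
  exact top_le_iff.1 (hs ▸ hΦ hst.le)

lemma IsYoung.sInf_eq_top_pos (hΦ : IsYoung Φ) : 0 < sInf {s | Φ s = ⊤} := by
  obtain ⟨t, ht, hfin⟩ := hΦ.2.2.2.2.2.1
  refine ht.trans_le (le_sInf fun s hs => ?_)
  by_contra! hst
  exact (hΦ.1 hst.le).not_gt (hs ▸ hfin)

lemma IsYoung.add (hΦ : IsYoung Φ) {g : ℝ≥0∞ → ℝ≥0∞} (hg_mono : Monotone g) (hg0 : g 0 = 0)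
    (hg_conv : ∀ x y a b : ℝ≥0∞, a + b = 1 → g (a * x + b * y) ≤ a * g x + b * g y)
    (hg_cont : ∀ t : ℝ≥0∞, 0 < t → ContinuousWithinAt g (Iio t) t)
    (hfin : ∃ t : ℝ≥0∞, 0 < t ∧ Φ t + g t < ⊤) : IsYoung (Φ + g) := by
  obtain ⟨hmono, h0, htop, hconv, hcont, -, t, ht, hpos⟩ := hΦ
  refine ⟨hmono.add hg_mono, by simp [h0, hg0], by simp [htop], fun x y a b hab => ?_,
    fun t ht => (hcont t ht).add (hg_cont t ht), hfin, t, ht, hpos.trans_le le_self_add⟩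
  calc Φ (a * x + b * y) + g (a * x + b * y)
      ≤ (a * Φ x + b * Φ y) + (a * g x + b * g y) :=
        add_le_add (hconv x y a b hab) (hg_conv x y a b hab)
    _ = a * (Φ x + g x) + b * (Φ y + g y) := by ring

end Young

theorem stmt3_general (Φ : ℝ≥0∞ → ℝ≥0∞) (hΦ : IsYoung Φ)
    (hb : sInf {t : ℝ≥0∞ | Φ t = ⊤} < ⊤)
    (δ : ℝ≥0) (hδ1 : δ < 1) :
    ∃ Ψ : ℝ≥0∞ → ℝ≥0∞, IsYoung Ψ ∧
      sInf {t : ℝ≥0∞ | Ψ t = ⊤} = sInf {t : ℝ≥0∞ | Φ t = ⊤} ∧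
      Ψ (sInf {t : ℝ≥0∞ | Ψ t = ⊤}) = ⊤ ∧
      ∀ t : ℝ≥0∞, t ≠ ⊤ → Ψ ((δ : ℝ≥0∞) * t) ≤ Φ t ∧ Φ t ≤ Ψ t := by
  set b := sInf {t : ℝ≥0∞ | Φ t = ⊤}
  set g := barrier b (b - δ * b)
  have hb0 : 0 < b := hΦ.sInf_eq_top_pos
  have hδb : (δ : ℝ≥0∞) * b < b := by
    simpa using ENNReal.mul_lt_mul_left hb0.ne' hb.ne (by exact_mod_cast hδ1 : (δ : ℝ≥0∞) < 1)
  have hg_zero : ∀ t ≤ δ * b, g t = 0 := fun t ht =>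
    barrier_eq_zero (by rwa [ENNReal.sub_sub_cancel hb.ne hδb.le])
  have hg_fin : ∀ t < b, g t < ⊤ := fun t => barrier_lt_top (ENNReal.sub_ne_top hb.ne)
  have hg_b : g b = ⊤ := barrier_self hb.ne (tsub_pos_of_lt hδb).ne' tsub_le_self
  have hΨ_top : {t | (Φ + g) t = ⊤} = Ici b := by
    ext t
    show (Φ + g) t = ⊤ ↔ b ≤ t
    refine ⟨fun h => not_lt.1 fun ht => ?_, fun ht => ?_⟩
    · exact (ENNReal.add_lt_top.2 ⟨lt_top_of_lt_sInf_eq_top ht, hg_fin t ht⟩).ne h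
    · exact top_le_iff.1 (hg_b ▸ (supRamp_mono _ _ ht).trans le_add_self)
  obtain ⟨t₀, ht₀, ht₀b⟩ := exists_between hb0
  refine ⟨Φ + g, hΦ.add (supRamp_mono _ _) (hg_zero 0 zero_le) (supRamp_convex _ _)
    (fun t _ => supRamp_continuousWithinAt_Iio _ _ t)
    ⟨t₀, ht₀, ENNReal.add_lt_top.2 ⟨lt_top_of_lt_sInf_eq_top ht₀b, hg_fin t₀ ht₀b⟩⟩,
    by rw [hΨ_top, csInf_Ici], by rw [hΨ_top, csInf_Ici, Pi.add_apply, hg_b, add_top],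
    fun t _ => ⟨?_, le_self_add⟩⟩
  rcases le_or_gt t b with htb | htb
  · rw [Pi.add_apply, hg_zero _ (by gcongr), add_zero]
    exact hΦ.1 (mul_le_of_le_one_left' (by exact_mod_cast hδ1.le))
  · rw [hΦ.1.eq_top_of_sInf_eq_top_lt htb]
    exact le_top

/-- A Young function of class `Y^(3)` is sandwiched by one of class `Y^(2)`
with the same `b(Φ)`. -/
theorem stmt3 (Φ : ℝ≥0∞ → ℝ≥0∞) (hΦ : IsYoung Φ)
    (hb : sInf {t : ℝ≥0∞ | Φ t = ⊤} < ⊤) (hΦb : Φ (sInf {t : ℝ≥0∞ | Φ t = ⊤}) < ⊤)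
    (δ : ℝ≥0) (hδ0 : 0 < δ) (hδ1 : δ < 1) :
    ∃ Ψ : ℝ≥0∞ → ℝ≥0∞, IsYoung Ψ ∧
      sInf {t : ℝ≥0∞ | Ψ t = ⊤} = sInf {t : ℝ≥0∞ | Φ t = ⊤} ∧
      Ψ (sInf {t : ℝ≥0∞ | Ψ t = ⊤}) = ⊤ ∧
      ∀ t : ℝ≥0∞, t ≠ ⊤ → Ψ ((δ : ℝ≥0∞) * t) ≤ Φ t ∧ Φ t ≤ Ψ t :=
  stmt3_general Φ hΦ hb δ hδ1
end

section
/- Let Φ be a Young function satisfying the ∇₂-condition. Then there exists a constant C_Φ > 0 such that for all locally integrable f on ℝⁿ, sup_{t ∈ (0,∞)} Φ(t) |{x : Mf(x) > t}| ≤ sup_{t ∈ (0,∞)} Φ(t) |{x : C_Φ |f(x)| > t}|, where M is the Hardy–Littlewood maximal operator. (Weak-weak type modular inequality.) -/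
open MeasureTheory ENNReal NNReal Metric Set Filter Topology

/-- Hardy–Littlewood maximal operator (for real-valued functions). -/
noncomputable def maxOpR {d : ℕ} (f : EuclideanSpace ℝ (Fin d) → ℝ)
    (x : EuclideanSpace ℝ (Fin d)) : ℝ≥0∞ :=
  ⨆ (a : EuclideanSpace ℝ (Fin d)) (r : ℝ) (_ : 0 < r) (_ : x ∈ ball a r),
    (volume (ball a r))⁻¹ * ∫⁻ y in ball a r, ENNReal.ofReal |f y|

/-! Fix `t` and cut `f` at height `t/2`: since `M f ≤ M (f·1_{|f|>t/2}) + t/2`, the weak (1,1)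
bound for `M` (Vitali covering) gives `|{M f > t}| ≤ (2·5^d/t) ∫_{|f|>t/2} |f|`. Slicing this tail
integral along the levels `κⁿ t/2` and using the iterated ∇₂-inequality `(2κ)^j Φ(t) ≤ Φ(κ^j t)`
bounds `Φ(t) |{M f > t}|` by a geometric series of copies of the right-hand supremum with
`C = 2κ^m`; `m` is chosen so that this series sums to at most one. -/

lemma Nabla2.exists_two_mul_le {Φ : ℝ≥0∞ → ℝ≥0∞} (hΦ : Nabla2 Φ) :
    ∃ κ : ℝ≥0∞, 1 < κ ∧ κ ≠ ⊤ ∧ ∀ s, 0 < s → 2 * κ * Φ s ≤ Φ (κ * s) := by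
  obtain ⟨k, hk, hΦk⟩ := hΦ
  refine ⟨k, mod_cast hk, coe_ne_top, fun s hs => ?_⟩
  have hk0 : (k : ℝ≥0∞) ≠ 0 := by simpa using (zero_lt_one.trans hk).ne'
  rw [mul_comm, ← ENNReal.le_div_iff_mul_le (Or.inl (mul_ne_zero two_ne_zero hk0))
    (Or.inl (mul_ne_top ofNat_ne_top coe_ne_top))]
  exact hΦk s hs

lemma two_mul_pow_mul_le_of_two_mul_le {Φ : ℝ≥0∞ → ℝ≥0∞} {κ : ℝ≥0∞} (hκ : κ ≠ 0)
    (hΦ : ∀ s, 0 < s → 2 * κ * Φ s ≤ Φ (κ * s)) (n : ℕ) {s : ℝ≥0∞} (hs : 0 < s) :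
    (2 * κ) ^ n * Φ s ≤ Φ (κ ^ n * s) := by
  induction n with
  | zero => simp
  | succ n ih =>
    calc (2 * κ) ^ (n + 1) * Φ s = 2 * κ * ((2 * κ) ^ n * Φ s) := by ring
      _ ≤ 2 * κ * Φ (κ ^ n * s) := by gcongr
      _ ≤ Φ (κ * (κ ^ n * s)) := hΦ _ (ENNReal.mul_pos (pow_ne_zero _ hκ) hs.ne')
      _ = Φ (κ ^ (n + 1) * s) := by rw [← mul_assoc, ← pow_succ']

lemma exists_pow_mul_lt_and_le {κ c x : ℝ≥0∞} (hκ : 1 < κ) (hc : c ≠ 0) (hx : x ≠ ⊤)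
    (hcx : c < x) : ∃ n : ℕ, κ ^ n * c < x ∧ x ≤ κ ^ (n + 1) * c := by
  have hex : ∃ n : ℕ, x ≤ κ ^ (n + 1) * c := by
    have hxc : x / c < ⊤ := ENNReal.div_lt_top hx hc
    obtain ⟨n, hn⟩ :=
      ((ENNReal.tendsto_pow_atTop_nhds_top_iff.2 hκ).eventually_const_lt hxc).exists
    refine ⟨n, (ENNReal.div_le_iff hc hcx.ne_top).1 (hn.le.trans ?_)⟩
    exact pow_le_pow_right₀ hκ.le n.le_succ
  refine ⟨Nat.find hex, ?_, Nat.find_spec hex⟩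
  cases hN : Nat.find hex with
  | zero => simpa using hcx
  | succ n => exact not_le.1 (Nat.find_min hex (hN ▸ n.lt_succ_self))

lemma tsum_pow_succ_mul_inv_two_mul_pow {κ : ℝ≥0∞} (hκ0 : κ ≠ 0) (hκt : κ ≠ ⊤) (m : ℕ) :
    ∑' n : ℕ, κ ^ (n + 1) * ((2 * κ) ^ (n + m))⁻¹ = 2 * κ * ((2 * κ) ^ m)⁻¹ := by
  have hterm (n : ℕ) : κ ^ (n + 1) * ((2 * κ) ^ (n + m))⁻¹ = κ * ((2 * κ) ^ m)⁻¹ * 2⁻¹ ^ n := by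
    have h2κ : 2 * κ ≠ ⊤ := mul_ne_top ofNat_ne_top hκt
    rw [pow_add (2 * κ) n m, mul_pow 2 κ n, ENNReal.mul_inv (Or.inr (pow_ne_top h2κ))
        (Or.inl (mul_ne_top (pow_ne_top ofNat_ne_top) (pow_ne_top hκt))),
      ENNReal.mul_inv (Or.inl (pow_ne_zero _ two_ne_zero)) (Or.inr (pow_ne_zero _ hκ0)),
      ENNReal.inv_pow, pow_succ κ n]
    calc κ ^ n * κ * ((2⁻¹) ^ n * (κ ^ n)⁻¹ * ((2 * κ) ^ m)⁻¹)
        = (κ ^ n * (κ ^ n)⁻¹) * (κ * ((2 * κ) ^ m)⁻¹ * 2⁻¹ ^ n) := by ring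
      _ = _ := by rw [ENNReal.mul_inv_cancel (pow_ne_zero _ hκ0) (pow_ne_top hκt), one_mul]
  simp_rw [hterm, ENNReal.tsum_mul_left, ENNReal.tsum_geometric, ENNReal.one_sub_inv_two, inv_inv]
  ring

section Modular

variable {α : Type*} [MeasurableSpace α] {μ : Measure α}

lemma lintegral_indicator_lt_le_tsum {h : α → ℝ≥0∞} (hh : AEMeasurable h μ)
    (h_fin : ∀ y, h y ≠ ⊤) {κ c : ℝ≥0∞} (hκ : 1 < κ) (hc : c ≠ 0) :
    ∫⁻ y, {y | c < h y}.indicator h y ∂μ ≤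
      ∑' n : ℕ, κ ^ (n + 1) * c * μ {y | κ ^ n * c < h y} := by
  have hmeas (n : ℕ) : NullMeasurableSet {y | κ ^ n * c < h y} μ :=
    nullMeasurableSet_lt aemeasurable_const hh
  calc ∫⁻ y, {y | c < h y}.indicator h y ∂μ
      ≤ ∫⁻ y, ∑' n : ℕ, {y | κ ^ n * c < h y}.indicator (fun _ => κ ^ (n + 1) * c) y ∂μ := by
        refine lintegral_mono fun y => ?_
        by_cases hy : c < h y
        · obtain ⟨n, hlt, hle⟩ := exists_pow_mul_lt_and_le hκ hc (h_fin y) hy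
          calc {y | c < h y}.indicator h y = h y := by simp [hy]
            _ ≤ κ ^ (n + 1) * c := hle
            _ = {y | κ ^ n * c < h y}.indicator (fun _ => κ ^ (n + 1) * c) y :=
                by simp [hlt]
            _ ≤ _ := ENNReal.le_tsum n
        · simp [hy]
    _ = ∑' n : ℕ, κ ^ (n + 1) * c * μ {y | κ ^ n * c < h y} := by
        rw [lintegral_tsum fun n => aemeasurable_const.indicator₀ (hmeas n)]
        simp_rw [lintegral_indicator_const₀ (hmeas _)]

lemma mul_lintegral_indicator_le_iSup {Φ : ℝ≥0∞ → ℝ≥0∞} {κ : ℝ≥0∞} (hκ : 1 < κ) (hκt : κ ≠ ⊤)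
    (hΦ : ∀ s, 0 < s → 2 * κ * Φ s ≤ Φ (κ * s)) (m : ℕ) {h : α → ℝ≥0∞}
    (hh : AEMeasurable h μ) (h_fin : ∀ y, h y ≠ ⊤) {c : ℝ≥0∞} (hc : c ≠ 0) (hct : c ≠ ⊤) :
    Φ (2 * c) * (c⁻¹ * ∫⁻ y, {y | c < h y}.indicator h y ∂μ) ≤
      2 * κ * ((2 * κ) ^ m)⁻¹ * ⨆ u ∈ Ioo 0 ⊤, Φ u * μ {y | u < 2 * κ ^ m * h y} := by
  set S := ⨆ u ∈ Ioo 0 ⊤, Φ u * μ {y | u < 2 * κ ^ m * h y}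
  have hκ0 : κ ≠ 0 := (zero_lt_one.trans hκ).ne'
  -- Rescaled by `2κ^m`, the slice at level `κⁿ c` is the level set at `κ^(n+m) (2c)`.
  have hlevel (n : ℕ) : Φ (2 * c) * μ {y | κ ^ n * c < h y} ≤ ((2 * κ) ^ (n + m))⁻¹ * S := by
    set u := κ ^ (n + m) * (2 * c)
    have h2c : 0 < 2 * c := ENNReal.mul_pos two_ne_zero hc
    have hu : u ∈ Ioo 0 ⊤ :=
      ⟨ENNReal.mul_pos (pow_ne_zero _ hκ0) h2c.ne',
        mul_lt_top (pow_lt_top hκt.lt_top) (mul_lt_top ofNat_lt_top hct.lt_top)⟩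
    have hset : {y | κ ^ n * c < h y} = {y | u < 2 * κ ^ m * h y} := by
      ext y
      change κ ^ n * c < h y ↔ u < 2 * κ ^ m * h y
      rw [show u = 2 * κ ^ m * (κ ^ n * c) by ring,
        ENNReal.mul_lt_mul_iff_right (mul_ne_zero two_ne_zero (pow_ne_zero _ hκ0))
          (mul_ne_top ofNat_ne_top (pow_ne_top hκt))]
    rw [← ENNReal.div_eq_inv_mul,
      ENNReal.le_div_iff_mul_le (Or.inl (pow_ne_zero _ (mul_ne_zero two_ne_zero hκ0)))
        (Or.inl (pow_ne_top (mul_ne_top ofNat_ne_top hκt))), hset]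
    calc Φ (2 * c) * μ {y | u < 2 * κ ^ m * h y} * (2 * κ) ^ (n + m)
        = (2 * κ) ^ (n + m) * Φ (2 * c) * μ {y | u < 2 * κ ^ m * h y} := by ring
      _ ≤ Φ u * μ {y | u < 2 * κ ^ m * h y} := by
        gcongr
        exact two_mul_pow_mul_le_of_two_mul_le hκ0 hΦ _ h2c
      _ ≤ S := le_biSup (fun u => Φ u * μ {y | u < 2 * κ ^ m * h y}) hu
  calc Φ (2 * c) * (c⁻¹ * ∫⁻ y, {y | c < h y}.indicator h y ∂μ)
      ≤ Φ (2 * c) * (c⁻¹ * ∑' n : ℕ, κ ^ (n + 1) * c * μ {y | κ ^ n * c < h y}) := by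
        gcongr
        exact lintegral_indicator_lt_le_tsum hh h_fin hκ hc
    _ = ∑' n : ℕ, (c⁻¹ * c) * (κ ^ (n + 1) * (Φ (2 * c) * μ {y | κ ^ n * c < h y})) := by
        rw [← ENNReal.tsum_mul_left, ← ENNReal.tsum_mul_left]
        congr 1 with n
        ring
    _ ≤ ∑' n : ℕ, κ ^ (n + 1) * (((2 * κ) ^ (n + m))⁻¹ * S) := by
        simp_rw [ENNReal.inv_mul_cancel hc hct, one_mul]
        exact ENNReal.tsum_le_tsum fun n => mul_le_mul_right (hlevel n) _
    _ = 2 * κ * ((2 * κ) ^ m)⁻¹ * S := by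
        simp_rw [← mul_assoc]
        rw [ENNReal.tsum_mul_right, tsum_pow_succ_mul_inv_two_mul_pow hκ0 hκt]

end Modular

section maxOpR

variable {d : ℕ}

lemma lt_maxOpR_iff {f : EuclideanSpace ℝ (Fin d) → ℝ} {x : EuclideanSpace ℝ (Fin d)}
    {t : ℝ≥0∞} :
    t < maxOpR f x ↔ ∃ a r, 0 < r ∧ x ∈ ball a r ∧
      t < (volume (ball a r))⁻¹ * ∫⁻ y in ball a r, ENNReal.ofReal |f y| := by
  simp only [maxOpR, lt_iSup_iff, exists_prop]

lemma isOpen_setOf_lt_maxOpR (f : EuclideanSpace ℝ (Fin d) → ℝ) (t : ℝ≥0∞) :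
    IsOpen {x | t < maxOpR f x} := by
  refine isOpen_iff_forall_mem_open.2 fun x hx => ?_
  obtain ⟨a, r, hr, hxa, hlt⟩ := lt_maxOpR_iff.1 hx
  exact ⟨ball a r, fun y hy => lt_maxOpR_iff.2 ⟨a, r, hr, hy, hlt⟩, isOpen_ball, hxa⟩

lemma mul_volume_ball_le_setLIntegral {f : EuclideanSpace ℝ (Fin d) → ℝ}
    {a : EuclideanSpace ℝ (Fin d)} {r : ℝ} (hr : 0 < r) {t : ℝ≥0∞}
    (ht : t < (volume (ball a r))⁻¹ * ∫⁻ y in ball a r, ENNReal.ofReal |f y|) :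
    t * volume (ball a r) ≤ ∫⁻ y in ball a r, ENNReal.ofReal |f y| := by
  calc t * volume (ball a r)
      ≤ (volume (ball a r))⁻¹ * (∫⁻ y in ball a r, ENNReal.ofReal |f y|) * volume (ball a r) := by
        gcongr
    _ = ∫⁻ y in ball a r, ENNReal.ofReal |f y| := by
        rw [mul_comm _ (volume _), ← mul_assoc,
          ENNReal.mul_inv_cancel (measure_ball_pos volume a hr).ne' measure_ball_lt_top.ne, one_mul]

lemma volume_ball_mul (x : EuclideanSpace ℝ (Fin d)) {r : ℝ} (hr : 0 < r) (s : ℝ) :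
    volume (ball x (r * s)) = ENNReal.ofReal (r ^ d) * volume (ball x s) := by
  rw [Measure.addHaar_ball_mul_of_pos volume x hr, Measure.addHaar_ball_center volume x s,
    finrank_euclideanSpace_fin]

lemma mul_volume_le_lintegral_of_isCompact (f : EuclideanSpace ℝ (Fin d) → ℝ) {t : ℝ≥0∞}
    {K : Set (EuclideanSpace ℝ (Fin d))} (hK : IsCompact K) (hKT : K ⊆ {x | t < maxOpR f x}) :
    t * volume K ≤ 5 ^ d * ∫⁻ y, ENNReal.ofReal |f y| := by
  choose! a ρ hρ hmem havg using fun x (hx : x ∈ {x | t < maxOpR f x}) => lt_maxOpR_iff.1 hx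
  -- Passing to a finite subcover bounds the radii, as the Vitali lemma requires.
  obtain ⟨s, hsT, hs, hKs⟩ := hK.elim_finite_subcover_image (fun x _ => isOpen_ball)
    fun x hx => mem_biUnion (hKT hx) (hmem x (hKT hx))
  obtain ⟨R, hR⟩ := (hs.image ρ).bddAbove
  obtain ⟨u, hus, hdisj, hcov⟩ := Vitali.exists_disjoint_subfamily_covering_enlargement_ball
    s a ρ R (fun x hx => hR (mem_image_of_mem ρ hx)) 5 (by norm_num)
  have hu : u.Countable := (hs.subset hus).countable
  have : Countable u := hu.to_subtype
  have hKu : K ⊆ ⋃ b ∈ u, ball (a b) (5 * ρ b) := by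
    refine hKs.trans (iUnion₂_subset fun x hx => ?_)
    obtain ⟨b, hb, hxb⟩ := hcov x hx
    exact hxb.trans (subset_biUnion_of_mem (u := fun b => ball (a b) (5 * ρ b)) hb)
  calc t * volume K
      ≤ t * ∑' b : u, volume (ball (a b) (5 * ρ b)) := by
        gcongr
        exact (measure_mono hKu).trans (measure_biUnion_le volume hu _)
    _ = 5 ^ d * ∑' b : u, t * volume (ball (a b) (ρ b)) := by
        rw [← ENNReal.tsum_mul_left, ← ENNReal.tsum_mul_left]
        congr 1 with b
        rw [volume_ball_mul _ (by norm_num : (0 : ℝ) < 5), ENNReal.ofReal_pow (by norm_num),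
          ENNReal.ofReal_ofNat]
        ring
    _ ≤ 5 ^ d * ∑' b : u, ∫⁻ y in ball (a b) (ρ b), ENNReal.ofReal |f y| := by
        gcongr with b
        exact mul_volume_ball_le_setLIntegral (hρ b (hsT (hus b.2))) (havg b (hsT (hus b.2)))
    _ = 5 ^ d * ∫⁻ y in ⋃ b : u, ball (a b) (ρ b), ENNReal.ofReal |f y| := by
        rw [lintegral_iUnion (fun _ => measurableSet_ball) (hdisj.subtype _ _)]
    _ ≤ 5 ^ d * ∫⁻ y, ENNReal.ofReal |f y| :=
        mul_le_mul_right (setLIntegral_le_lintegral _ _) _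

lemma mul_volume_lt_maxOpR_le_lintegral (f : EuclideanSpace ℝ (Fin d) → ℝ) (t : ℝ≥0∞) :
    t * volume {x | t < maxOpR f x} ≤ 5 ^ d * ∫⁻ y, ENNReal.ofReal |f y| := by
  rw [(isOpen_setOf_lt_maxOpR f t).measure_eq_iSup_isCompact]
  simp_rw [ENNReal.mul_iSup]
  exact iSup_le fun K => iSup₂_le fun hKT hK => mul_volume_le_lintegral_of_isCompact f hK hKT

lemma maxOpR_le_maxOpR_indicator_add (f : EuclideanSpace ℝ (Fin d) → ℝ) (s : ℝ≥0∞)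
    (x : EuclideanSpace ℝ (Fin d)) :
    maxOpR f x ≤ maxOpR ({y | s < ENNReal.ofReal |f y|}.indicator f) x + s := by
  set g := {y | s < ENNReal.ofReal |f y|}.indicator f
  have hfg (y) : ENNReal.ofReal |f y| ≤ ENNReal.ofReal |g y| + s := by
    by_cases hy : s < ENNReal.ofReal |f y|
    · simp [g, hy]
    · simpa [g, hy] using not_lt.1 hy
  refine iSup_le fun a => iSup_le fun r => iSup_le fun hr => iSup_le fun hx => ?_
  have hV : (volume (ball a r))⁻¹ * volume (ball a r) = 1 :=
    ENNReal.inv_mul_cancel (measure_ball_pos volume a hr).ne' measure_ball_lt_top.ne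
  calc (volume (ball a r))⁻¹ * ∫⁻ y in ball a r, ENNReal.ofReal |f y|
      ≤ (volume (ball a r))⁻¹ * ∫⁻ y in ball a r, (ENNReal.ofReal |g y| + s) := by
        gcongr with y
        exact hfg y
    _ = (volume (ball a r))⁻¹ * (∫⁻ y in ball a r, ENNReal.ofReal |g y|) + s := by
        rw [lintegral_add_right _ measurable_const, setLIntegral_const, mul_add,
          mul_left_comm, hV, mul_one]
    _ ≤ maxOpR g x + s := by
        gcongr
        exact le_iSup₂_of_le a r (le_iSup₂_of_le (α := ℝ≥0∞) hr hx le_rfl)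

lemma mul_volume_lt_maxOpR_le_iSup {Φ : ℝ≥0∞ → ℝ≥0∞} {κ : ℝ≥0∞} (hκ : 1 < κ) (hκt : κ ≠ ⊤)
    (hΦ : ∀ s, 0 < s → 2 * κ * Φ s ≤ Φ (κ * s)) {m : ℕ} (hm : 2 * 5 ^ d * κ ≤ (2 * κ) ^ m)
    {f : EuclideanSpace ℝ (Fin d) → ℝ} (hf : AEMeasurable f) {t : ℝ≥0∞} (ht : t ∈ Ioo 0 ⊤) :
    Φ t * volume {x | t < maxOpR f x} ≤
      ⨆ u ∈ Ioo 0 ⊤, Φ u * volume {x | u < 2 * κ ^ m * ENNReal.ofReal |f x|} := by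
  set S := ⨆ u ∈ Ioo 0 ⊤, Φ u * volume {x | u < 2 * κ ^ m * ENNReal.ofReal |f x|}
  set c := t / 2
  set h := fun y => ENNReal.ofReal |f y|
  set E := {y | c < h y}
  have hc : c ≠ 0 := (ENNReal.div_pos ht.1.ne' ofNat_ne_top).ne'
  have hct : c ≠ ⊤ := ENNReal.div_ne_top ht.2.ne two_ne_zero
  have htc : t = 2 * c := (ENNReal.mul_div_cancel two_ne_zero ofNat_ne_top).symm
  have hsub : {x | t < maxOpR f x} ⊆ {x | c < maxOpR (E.indicator f) x} := fun x hx => by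
    have := hx.trans_le (maxOpR_le_maxOpR_indicator_add f c x)
    rwa [htc, two_mul, ENNReal.add_lt_add_iff_right hct] at this
  have hweak : volume {x | c < maxOpR (E.indicator f) x} ≤
      c⁻¹ * (5 ^ d * ∫⁻ y, E.indicator h y) := by
    rw [← ENNReal.div_eq_inv_mul, ENNReal.le_div_iff_mul_le (Or.inl hc) (Or.inl hct), mul_comm]
    convert mul_volume_lt_maxOpR_le_lintegral (E.indicator f) c using 4 with y
    by_cases hy : y ∈ E <;> simp [hy, h]
  have hcoef : 2 * 5 ^ d * κ * ((2 * κ) ^ m)⁻¹ ≤ 1 := by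
    rw [← div_eq_mul_inv]
    exact ENNReal.div_le_of_le_mul (by rwa [one_mul])
  calc Φ t * volume {x | t < maxOpR f x}
      ≤ Φ (2 * c) * (c⁻¹ * (5 ^ d * ∫⁻ y, E.indicator h y)) := by
        rw [← htc]
        gcongr
        exact (measure_mono hsub).trans hweak
    _ = 5 ^ d * (Φ (2 * c) * (c⁻¹ * ∫⁻ y, E.indicator h y)) := by ring
    _ ≤ 5 ^ d * (2 * κ * ((2 * κ) ^ m)⁻¹ * S) :=
        mul_le_mul_right (mul_lintegral_indicator_le_iSup hκ hκt hΦ m hf.abs.ennreal_ofReal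
          (fun _ => ofReal_ne_top) hc hct) _
    _ = 2 * 5 ^ d * κ * ((2 * κ) ^ m)⁻¹ * S := by ring
    _ ≤ S := mul_le_of_le_one_left zero_le hcoef

end maxOpR

theorem stmt8_general {d : ℕ} (Φ : ℝ≥0∞ → ℝ≥0∞) (hN : Nabla2 Φ) :
    ∃ C : ℝ≥0∞, 0 < C ∧ C ≠ ⊤ ∧
      ∀ f : EuclideanSpace ℝ (Fin d) → ℝ, LocallyIntegrable f volume →
        (⨆ t ∈ Set.Ioo (0 : ℝ≥0∞) ⊤, Φ t * volume {x | t < maxOpR f x}) ≤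
          ⨆ t ∈ Set.Ioo (0 : ℝ≥0∞) ⊤, Φ t * volume {x | t < C * ENNReal.ofReal |f x|} := by
  obtain ⟨κ, hκ, hκt, hΦ⟩ := hN.exists_two_mul_le
  have h2κ : 1 < 2 * κ := ENNReal.one_lt_two.trans_le (le_mul_of_one_le_right zero_le hκ.le)
  obtain ⟨m, hm⟩ : ∃ m : ℕ, 2 * 5 ^ d * κ ≤ (2 * κ) ^ m :=
    ((ENNReal.tendsto_pow_atTop_nhds_top_iff.2 h2κ).eventually_const_le
      (mul_lt_top (mul_lt_top ofNat_lt_top (pow_lt_top ofNat_lt_top)) hκt.lt_top)).exists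
  refine ⟨2 * κ ^ m, ENNReal.mul_pos two_ne_zero (pow_ne_zero _ (zero_lt_one.trans hκ).ne'),
    mul_ne_top ofNat_ne_top (pow_ne_top hκt), fun f hf => iSup₂_le fun t ht => ?_⟩
  exact mul_volume_lt_maxOpR_le_iSup hκ hκt hΦ hm hf.aestronglyMeasurable.aemeasurable ht

/-- Weak-weak type modular inequality for the Hardy–Littlewood maximal operator. -/
theorem stmt8 {d : ℕ} (Φ : ℝ≥0∞ → ℝ≥0∞) (hΦ : IsYoung Φ) (hN : Nabla2 Φ) :
    ∃ C : ℝ≥0∞, 0 < C ∧ C ≠ ⊤ ∧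
      ∀ f : EuclideanSpace ℝ (Fin d) → ℝ, LocallyIntegrable f volume →
        (⨆ t ∈ Set.Ioo (0 : ℝ≥0∞) ⊤, Φ t * volume {x | t < maxOpR f x}) ≤
          ⨆ t ∈ Set.Ioo (0 : ℝ≥0∞) ⊤, Φ t * volume {x | t < C * ENNReal.ofReal |f x|} :=
  stmt8_general Φ hN
end

section
/- Let ρ : (0,∞) → (0,∞) satisfy sup_{r ≤ t ≤ 2r} ρ(t) ≤ C ∫_{K₁r}^{K₂r} ρ(t)/t dt for all r > 0 (with constants 0 < K₁ < K₂), and define ρ̃(r) = ∫_{K₁r}^{K₂r} ρ(t)/t dt. Then there is a constant C' such that for all r ∈ (0,∞): Σ_{j=-∞}^{-1} ρ̃(2ʲr) ≤ C' ∫_0^{K₂r} ρ(t)/t dt; moreover, if τ : (0,∞) → (0,∞) satisfies the doubling condition, then Σ_{j=0}^{∞} ρ̃(2ʲr) τ(2ʲr) ≤ C' ∫_{K₁r}^{∞} ρ(t)τ(t)/t dt. -/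
open MeasureTheory ENNReal NNReal Metric Set Filter Topology

/-- `ρ̃(r) = ∫_{K₁r}^{K₂r} ρ(t)/t dt`. -/
noncomputable def rhoTilde (ρ : ℝ → ℝ≥0∞) (K₁ K₂ r : ℝ) : ℝ≥0∞ :=
  ∫⁻ t in Set.Ioc (K₁ * r) (K₂ * r), ρ t / ENNReal.ofReal t


/-! The intervals `(K₁ s, K₂ s]` at dyadic scales `s` overlap boundedly: once `K₂ ≤ K₁ 2 ^ N`,
intervals whose indices differ by at least `N` are disjoint, so a dyadic sum of integrals over
them is at most `N` times the integral over their union. For the weighted sum, the doubling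
condition iterated `M` times (with `K₂ ≤ 2 ^ M` and `1 ≤ 2 ^ M K₁`) moves `τ (2 ^ j r)` inside the
integral as `τ t`, at the cost of a factor `D ^ M`. -/

/-- For each residue `k < N` the sets `S (m * N + k)` are pairwise disjoint, so each residue
class contributes at most `∫⁻ t in T, f t ∂μ`. -/
lemma tsum_setLIntegral_le_of_disjoint_of_add_le {α : Type*} [MeasurableSpace α]
    (μ : Measure α) (f : α → ℝ≥0∞) {S : ℕ → Set α} {T : Set α} (N : ℕ)
    (hS : ∀ j, MeasurableSet (S j)) (hST : ∀ j, S j ⊆ T)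
    (hdisj : ∀ i j, i + N ≤ j → Disjoint (S i) (S j)) :
    ∑' j, ∫⁻ t in S j, f t ∂μ ≤ N * ∫⁻ t in T, f t ∂μ := by
  rcases Nat.eq_zero_or_pos N with rfl | hN
  · simp [disjoint_self.mp (hdisj _ _ le_rfl)]
  have : NeZero N := ⟨hN.ne'⟩
  have residue_class_le (k : Fin N) :
      ∑' m : ℕ, ∫⁻ t in S (m * N + k), f t ∂μ ≤ ∫⁻ t in T, f t ∂μ := by
    have hd : Pairwise (Function.onFun Disjoint fun m : ℕ => S (m * N + k)) := by
      intro i j hij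
      rcases hij.lt_or_gt with h | h
      · exact hdisj _ _ (by nlinarith)
      · exact (hdisj _ _ (by nlinarith)).symm
    rw [← lintegral_sum_measure, ← Measure.restrict_iUnion hd fun m => hS _]
    exact lintegral_mono' (Measure.restrict_mono (iUnion_subset fun m => hST _) le_rfl) le_rfl
  calc ∑' j, ∫⁻ t in S j, f t ∂μ
      = ∑ k : Fin N, ∑' m : ℕ, ∫⁻ t in S (m * N + k), f t ∂μ := by
        rw [← (Nat.divModEquiv N).symm.tsum_eq, ENNReal.tsum_prod', ENNReal.tsum_comm,
          tsum_fintype]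
        rfl
    _ ≤ ∑ _k : Fin N, ∫⁻ t in T, f t ∂μ := Finset.sum_le_sum fun k _ => residue_class_le k
    _ = N * ∫⁻ t in T, f t ∂μ := by simp

/-- Clamping `y` to `[x / 2, 2 * x]` gives an intermediate point one doubling step from `x`
and within a factor `2 ^ n` of `y`. -/
lemma le_pow_mul_of_doubling {τ : ℝ → ℝ≥0∞} {D : ℝ≥0∞}
    (hτ : ∀ r s : ℝ, 0 < r → 0 < s → r ≤ 2 * s → s ≤ 2 * r → τ r ≤ D * τ s) (n : ℕ) :
    ∀ {x y : ℝ}, 0 < x → 0 < y → x ≤ 2 ^ n * y → y ≤ 2 ^ n * x → τ x ≤ D ^ n * τ y := by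
  induction n with
  | zero =>
    intro x y _ _ hxy hyx
    simp only [pow_zero, one_mul] at hxy hyx ⊢
    rw [le_antisymm hxy hyx]
  | succ n ih =>
    intro x y hx hy hxy hyx
    have hpow : (1 : ℝ) ≤ 2 ^ n := one_le_pow₀ one_le_two
    rw [pow_succ] at hxy hyx
    set z := max (x / 2) (min (2 * x) y)
    have hz : 0 < z := lt_max_of_lt_left (by linarith)
    have hxz : x ≤ 2 * z := by linarith [le_max_left (x / 2) (min (2 * x) y)]
    have hzx : z ≤ 2 * x := max_le (by linarith) (min_le_left _ _)
    have hzy : z ≤ 2 ^ n * y := by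
      refine max_le (by linarith) ((min_le_right _ _).trans ?_)
      nlinarith
    have hyz : y ≤ 2 ^ n * z := by
      rcases le_total y (2 * x) with h | h
      · have : y ≤ z := (le_min h le_rfl).trans (le_max_right _ _)
        nlinarith
      · have : 2 * x ≤ z := (le_min le_rfl h).trans (le_max_right _ _)
        nlinarith
    calc τ x ≤ D * τ z := hτ x z hx hz hxz hzx
      _ ≤ D * (D ^ n * τ y) := by gcongr; exact ih hz hy hzy hyz
      _ = D ^ (n + 1) * τ y := by ring

lemma disjoint_Ioc_mul_of_pow_mul_le {K₁ K₂ s s' : ℝ} {N : ℕ} (hK₁ : 0 ≤ K₁)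
    (hN : K₂ ≤ K₁ * 2 ^ N) (hs : 0 ≤ s) (hss' : 2 ^ N * s ≤ s') :
    Disjoint (Ioc (K₁ * s) (K₂ * s)) (Ioc (K₁ * s') (K₂ * s')) :=
  Set.Ioc_disjoint_Ioc_of_le <| by nlinarith

lemma Ioc_mul_subset_Ioc_zero {K₁ K₂ s r : ℝ} (hK₁ : 0 ≤ K₁) (hs : 0 < s) (hsr : s ≤ r) :
    Ioc (K₁ * s) (K₂ * s) ⊆ Ioc 0 (K₂ * r) := by
  rintro t ⟨ht₁, ht₂⟩
  have hK₂ : 0 < K₂ := pos_of_mul_pos_left (by nlinarith) hs.le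
  exact ⟨by nlinarith, by nlinarith⟩

lemma Ioc_mul_subset_Ioi {K₁ K₂ s r : ℝ} (hK₁ : 0 ≤ K₁) (hrs : r ≤ s) :
    Ioc (K₁ * s) (K₂ * s) ⊆ Ioi (K₁ * r) :=
  fun _ ht => lt_of_le_of_lt (by nlinarith) ht.1

lemma rhoTilde_mul_le {ρ τ : ℝ → ℝ≥0∞} {K₁ K₂ : ℝ} {D : ℝ≥0∞} {M : ℕ} (hK₁ : 0 < K₁)
    (hK₁M : 1 ≤ 2 ^ M * K₁) (hK₂M : K₂ ≤ 2 ^ M) (hD : D ≠ ⊤)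
    (hτ : ∀ r s : ℝ, 0 < r → 0 < s → r ≤ 2 * s → s ≤ 2 * r → τ r ≤ D * τ s)
    {s : ℝ} (hs : 0 < s) :
    rhoTilde ρ K₁ K₂ s * τ s ≤
      D ^ M * ∫⁻ t in Ioc (K₁ * s) (K₂ * s), ρ t * τ t / ENNReal.ofReal t := by
  rw [← lintegral_const_mul' _ _ (pow_ne_top hD)]
  refine (lintegral_mul_const_le _ _).trans (setLIntegral_mono' measurableSet_Ioc ?_)
  rintro t ⟨ht₁, ht₂⟩
  have ht : 0 < t := lt_of_le_of_lt (by positivity) ht₁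
  have hst : τ s ≤ D ^ M * τ t :=
    le_pow_mul_of_doubling hτ M hs ht (by nlinarith) (by nlinarith)
  calc ρ t / ENNReal.ofReal t * τ s ≤ ρ t / ENNReal.ofReal t * (D ^ M * τ t) := by gcongr
    _ = D ^ M * (ρ t * τ t / ENNReal.ofReal t) := by simp only [div_eq_mul_inv]; ring

lemma tsum_rhoTilde_two_zpow_le (ρ : ℝ → ℝ≥0∞) {K₁ K₂ r : ℝ} {N : ℕ} (hK₁ : 0 ≤ K₁)
    (hN : K₂ ≤ K₁ * 2 ^ N) (hr : 0 < r) :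
    ∑' j : ℕ, rhoTilde ρ K₁ K₂ ((2 : ℝ) ^ (-(j : ℤ) - 1) * r) ≤
      N * ∫⁻ t in Ioc 0 (K₂ * r), ρ t / ENNReal.ofReal t := by
  refine tsum_setLIntegral_le_of_disjoint_of_add_le _ _ N (fun _ => measurableSet_Ioc)
    (fun j => Ioc_mul_subset_Ioc_zero hK₁ (by positivity) ?_) fun i j hij => ?_
  · exact mul_le_of_le_one_left hr.le (zpow_le_one_of_nonpos₀ one_le_two (by omega))
  refine (disjoint_Ioc_mul_of_pow_mul_le hK₁ hN (by positivity) ?_).symm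
  rw [← mul_assoc, ← zpow_natCast, ← zpow_add₀ two_ne_zero]
  gcongr
  · exact one_le_two
  · omega

lemma tsum_rhoTilde_mul_two_pow_le {ρ τ : ℝ → ℝ≥0∞} {K₁ K₂ r : ℝ} {D : ℝ≥0∞} {N M : ℕ}
    (hK₁ : 0 < K₁) (hN : K₂ ≤ K₁ * 2 ^ N) (hK₁M : 1 ≤ 2 ^ M * K₁) (hK₂M : K₂ ≤ 2 ^ M)
    (hD : D ≠ ⊤) (hτ : ∀ r s : ℝ, 0 < r → 0 < s → r ≤ 2 * s → s ≤ 2 * r → τ r ≤ D * τ s)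
    (hr : 0 < r) :
    ∑' j : ℕ, rhoTilde ρ K₁ K₂ ((2 : ℝ) ^ j * r) * τ ((2 : ℝ) ^ j * r) ≤
      D ^ M * (N * ∫⁻ t in Ioi (K₁ * r), ρ t * τ t / ENNReal.ofReal t) := by
  calc ∑' j : ℕ, rhoTilde ρ K₁ K₂ ((2 : ℝ) ^ j * r) * τ ((2 : ℝ) ^ j * r)
      ≤ ∑' j : ℕ, D ^ M * ∫⁻ t in Ioc (K₁ * (2 ^ j * r)) (K₂ * (2 ^ j * r)),
          ρ t * τ t / ENNReal.ofReal t :=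
        ENNReal.tsum_le_tsum fun j => rhoTilde_mul_le hK₁ hK₁M hK₂M hD hτ (by positivity)
    _ = D ^ M * ∑' j : ℕ, ∫⁻ t in Ioc (K₁ * (2 ^ j * r)) (K₂ * (2 ^ j * r)),
          ρ t * τ t / ENNReal.ofReal t := ENNReal.tsum_mul_left
    _ ≤ D ^ M * (N * ∫⁻ t in Ioi (K₁ * r), ρ t * τ t / ENNReal.ofReal t) := by
      gcongr
      refine tsum_setLIntegral_le_of_disjoint_of_add_le _ _ N (fun _ => measurableSet_Ioc)
        (fun j => Ioc_mul_subset_Ioi hK₁.le ?_) fun i j hij => ?_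
      · exact le_mul_of_one_le_left hr.le (one_le_pow₀ one_le_two)
      refine disjoint_Ioc_mul_of_pow_mul_le hK₁.le hN (by positivity) ?_
      rw [← mul_assoc, ← pow_add]
      gcongr
      · exact one_le_two
      · omega

theorem stmt14_general (ρ τ : ℝ → ℝ≥0∞)
    (K₁ K₂ : ℝ) (hK₁ : 0 < K₁)
    (Cτ : ℝ≥0∞) (hCτ : Cτ ≠ ⊤)
    (hdouble : ∀ r s : ℝ, 0 < r → 0 < s → 1 / 2 ≤ r / s → r / s ≤ 2 → τ r ≤ Cτ * τ s) :
    ∃ C' : ℝ≥0∞, 0 < C' ∧ C' ≠ ⊤ ∧ ∀ r : ℝ, 0 < r →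
      ((∑' j : ℕ, rhoTilde ρ K₁ K₂ ((2 : ℝ) ^ (-(j : ℤ) - 1) * r)) ≤
        C' * ∫⁻ t in Set.Ioc 0 (K₂ * r), ρ t / ENNReal.ofReal t) ∧
      ((∑' j : ℕ, rhoTilde ρ K₁ K₂ ((2 : ℝ) ^ j * r) * τ ((2 : ℝ) ^ j * r)) ≤
        C' * ∫⁻ t in Set.Ioi (K₁ * r), ρ t * τ t / ENNReal.ofReal t) := by
  obtain ⟨N, hN⟩ : ∃ N : ℕ, K₂ / K₁ < 2 ^ N := pow_unbounded_of_one_lt _ one_lt_two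
  obtain ⟨M, hM⟩ : ∃ M : ℕ, max K₂ (1 / K₁) < 2 ^ M := pow_unbounded_of_one_lt _ one_lt_two
  have hgap : K₂ ≤ K₁ * 2 ^ (N + 1) := by
    rw [div_lt_iff₀ hK₁] at hN
    calc K₂ ≤ K₁ * 2 ^ N := by linarith
      _ ≤ K₁ * 2 ^ (N + 1) := by gcongr <;> norm_num
  have hK₁M : 1 ≤ 2 ^ M * K₁ := by
    rw [← div_le_iff₀ hK₁]; exact (le_max_right _ _).trans hM.le
  have hK₂M : K₂ ≤ 2 ^ M := (le_max_left _ _).trans hM.le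
  set D := max 1 Cτ
  have hD : D ≠ ⊤ := max_ne_top one_ne_top hCτ
  have hDM : 1 ≤ D ^ M := one_le_pow₀ (le_max_left _ _)
  have hτ (r s : ℝ) (hr : 0 < r) (hs : 0 < s) (hrs : r ≤ 2 * s) (hsr : s ≤ 2 * r) :
      τ r ≤ D * τ s :=
    (hdouble r s hr hs (by rw [le_div_iff₀ hs]; linarith) (by rw [div_le_iff₀ hs]; linarith)).trans
      (by gcongr; exact le_max_right _ _)
  refine ⟨(N + 1 : ℕ) * D ^ M, ?_, ?_, fun r hr => ⟨?_, ?_⟩⟩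
  · exact ENNReal.mul_pos (by simp) (zero_lt_one.trans_le hDM).ne'
  · exact ENNReal.mul_ne_top (natCast_ne_top _) (pow_ne_top hD)
  · refine (tsum_rhoTilde_two_zpow_le ρ hK₁.le hgap hr).trans ?_
    gcongr
    exact le_mul_of_one_le_right' hDM
  · refine (tsum_rhoTilde_mul_two_pow_le hK₁ hgap hK₁M hK₂M hD hτ hr).trans_eq ?_
    ring

/-- Dyadic sums of `ρ̃` are controlled by integrals of `ρ` (resp. of `ρ τ`). -/
theorem stmt14 (ρ τ : ℝ → ℝ≥0∞)
    (hρ : ∀ t : ℝ, 0 < t → 0 < ρ t ∧ ρ t < ⊤)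
    (hτ : ∀ t : ℝ, 0 < t → 0 < τ t ∧ τ t < ⊤)
    (K₁ K₂ : ℝ) (hK₁ : 0 < K₁) (hK : K₁ < K₂)
    (C : ℝ≥0∞) (hC : C ≠ ⊤)
    (hsup : ∀ r : ℝ, 0 < r → ∀ t ∈ Set.Icc r (2 * r), ρ t ≤ C * rhoTilde ρ K₁ K₂ r)
    (Cτ : ℝ≥0∞) (hCτ : Cτ ≠ ⊤)
    (hdouble : ∀ r s : ℝ, 0 < r → 0 < s → 1 / 2 ≤ r / s → r / s ≤ 2 → τ r ≤ Cτ * τ s) :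
    ∃ C' : ℝ≥0∞, 0 < C' ∧ C' ≠ ⊤ ∧ ∀ r : ℝ, 0 < r →
      ((∑' j : ℕ, rhoTilde ρ K₁ K₂ ((2 : ℝ) ^ (-(j : ℤ) - 1) * r)) ≤
        C' * ∫⁻ t in Set.Ioc 0 (K₂ * r), ρ t / ENNReal.ofReal t) ∧
      ((∑' j : ℕ, rhoTilde ρ K₁ K₂ ((2 : ℝ) ^ j * r) * τ ((2 : ℝ) ^ j * r)) ≤
        C' * ∫⁻ t in Set.Ioi (K₁ * r), ρ t * τ t / ENNReal.ofReal t) :=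
  stmt14_general ρ τ K₁ K₂ hK₁ Cτ hCτ hdouble
end
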